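/- Let G be a finite connected graph and let v be a boundary vertex of G that is not a simplicial vertex. Then there exist vertices a, b ∈ ∂(G) \ {v} such that v is not mutually maximally distant with a and v is not mutually maximally distant with b. -/

import Mathlib

open SimpleGraph

variable {V : Type*}

/-- `u` is maximally distant from `v` in `G`: every neighbor `w` of `u`
satisfies `d(v,w) ≤ d(v,u)`. -/
def MaxDistant (G : SimpleGraph V) (u v : V) : Prop :=
  ∀ w, G.Adj u w → G.dist v w ≤ G.dist v u

/-- `u` and `v` are mutually maximally distant in `G`. -/
def MMD (G : SimpleGraph V) (u v : V) : Prop :=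
  MaxDistant G u v ∧ MaxDistant G v u

/-- The boundary of `G`: vertices maximally distant from some vertex. -/
def boundary (G : SimpleGraph V) : Set V := {u | ∃ v, MaxDistant G u v}

/-- The strong resolving graph on the whole vertex set (`G_{SR+I}`):
two vertices are adjacent iff they are distinct and mutually maximally distant. -/
def srGraphI (G : SimpleGraph V) : SimpleGraph V where
  Adj u v := u ≠ v ∧ MMD G u v
  symm := ⟨by
    rintro u v ⟨hne, h1, h2⟩
    exact ⟨hne.symm, h2, h1⟩⟩
  loopless := ⟨by
    rintro u ⟨hne, _⟩
    exact hne rfl⟩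

/-- The strong resolving graph `G_SR`, with vertex set the boundary of `G`. -/
def srGraph (G : SimpleGraph V) : SimpleGraph (boundary G) :=
  (srGraphI G).induce (boundary G)

/-- `u` and `v` are true twins: distinct vertices with equal closed neighborhoods. -/
def TrueTwins (G : SimpleGraph V) (u v : V) : Prop :=
  u ≠ v ∧ insert u (G.neighborSet u) = insert v (G.neighborSet v)

/-- `u` and `v` are false twins: distinct vertices with equal open neighborhoods. -/
def FalseTwins (G : SimpleGraph V) (u v : V) : Prop :=
  u ≠ v ∧ G.neighborSet u = G.neighborSet v

/-- A vertex is simplicial if its neighborhood induces a complete graph. -/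
def IsSimplicial (G : SimpleGraph V) (v : V) : Prop :=
  ∀ a b, G.Adj v a → G.Adj v b → a ≠ b → G.Adj a b

/-- `w` strongly resolves `u` and `v`. -/
def StronglyResolves (G : SimpleGraph V) (w u v : V) : Prop :=
  G.dist w u = G.dist w v + G.dist v u ∨ G.dist w v = G.dist w u + G.dist u v

/-- `S` is a strong metric generator for `G`. -/
def IsStrongMetricGenerator (G : SimpleGraph V) (S : Set V) : Prop :=
  ∀ u v : V, u ≠ v → ∃ w ∈ S, StronglyResolves G w u v

/-- The strong metric dimension of `G`. -/
noncomputable def sdim (G : SimpleGraph V) : ℕ :=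
  sInf {n | ∃ S : Set V, S.ncard = n ∧ IsStrongMetricGenerator G S}

/-- `S` is a vertex cover of `H`. -/
def IsVertexCover (H : SimpleGraph V) (S : Set V) : Prop :=
  ∀ u v : V, H.Adj u v → u ∈ S ∨ v ∈ S

/-- The vertex cover number of `H`. -/
noncomputable def vertexCoverNumber (H : SimpleGraph V) : ℕ :=
  sInf {n | ∃ S : Set V, S.ncard = n ∧ _root_.IsVertexCover H S}

/-- The graph `G*`: distinct vertices adjacent iff at distance at least two
or true twins. -/
def GStar (G : SimpleGraph V) : SimpleGraph V where
  Adj u v := u ≠ v ∧ (2 ≤ G.dist u v ∨ TrueTwins G u v)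
  symm := ⟨by
    rintro u v ⟨hne, h | h⟩
    · exact ⟨hne.symm, Or.inl (by rwa [G.dist_comm])⟩
    · exact ⟨hne.symm, Or.inr ⟨h.1.symm, h.2.symm⟩⟩⟩
  loopless := ⟨by
    rintro u ⟨hne, _⟩
    exact hne rfl⟩

/-- The direct (tensor) product of two graphs. -/
def DirectProd {α β : Type*} (G : SimpleGraph α) (H : SimpleGraph β) :
    SimpleGraph (α × β) where
  Adj x y := G.Adj x.1 y.1 ∧ H.Adj x.2 y.2
  symm := ⟨fun _ _ h => ⟨h.1.symm, h.2.symm⟩⟩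
  loopless := ⟨fun x h => G.loopless.irrefl x.1 h.1⟩

/-- The strong product of two graphs. -/
def StrongProd {α β : Type*} (G : SimpleGraph α) (H : SimpleGraph β) :
    SimpleGraph (α × β) where
  Adj x y := x ≠ y ∧ (x.1 = y.1 ∨ G.Adj x.1 y.1) ∧ (x.2 = y.2 ∨ H.Adj x.2 y.2)
  symm := ⟨by
    rintro x y ⟨hne, h1, h2⟩
    exact ⟨hne.symm, h1.imp Eq.symm Adj.symm, h2.imp Eq.symm Adj.symm⟩⟩
  loopless := ⟨by
    rintro x ⟨hne, _⟩
    exact hne rfl⟩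

/-- The Cartesian sum (disjunctive product) of two graphs. -/
def CartSum {α β : Type*} (G : SimpleGraph α) (H : SimpleGraph β) :
    SimpleGraph (α × β) where
  Adj x y := G.Adj x.1 y.1 ∨ H.Adj x.2 y.2
  symm := ⟨fun _ _ h => h.imp Adj.symm Adj.symm⟩
  loopless := ⟨fun x h => h.elim (G.loopless.irrefl x.1) (H.loopless.irrefl x.2)⟩

/-- The lexicographic product of two graphs. -/
def LexProd {α β : Type*} (G : SimpleGraph α) (H : SimpleGraph β) :
    SimpleGraph (α × β) where
  Adj x y := G.Adj x.1 y.1 ∨ (x.1 = y.1 ∧ H.Adj x.2 y.2)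
  symm := ⟨fun _ _ h => h.imp Adj.symm (fun h => ⟨h.1.symm, h.2.symm⟩)⟩
  loopless := ⟨fun x h => h.elim (G.loopless.irrefl x.1) (fun h => H.loopless.irrefl x.2 h.2)⟩

/-- The disjoint union of `n` copies of the complete graph on `m` vertices. -/
def CopiesComplete (n m : ℕ) : SimpleGraph (Fin n × Fin m) where
  Adj x y := x.1 = y.1 ∧ x.2 ≠ y.2
  symm := ⟨fun _ _ h => ⟨h.1.symm, h.2.symm⟩⟩
  loopless := ⟨fun x h => h.2 rfl⟩

/-- Every pair of vertices lies on a common cycle of length five. -/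
def C5Connected (G : SimpleGraph V) : Prop :=
  ∀ u v : V, ∃ (w : V) (c : G.Walk w w), c.IsCycle ∧ c.length = 5 ∧
    u ∈ c.support ∧ v ∈ c.support

/-!
Pick non-adjacent neighbours `x`, `y` of `v`. Walking from `x` along edges that lead strictly
away from `y` preserves `d(x,u) < d(v,u) < d(y,u)`, because `v` is adjacent to `y`; in a finite
graph such a walk ends at a vertex `a` maximally distant from `y`, so `a ∈ ∂(G)`, and the neighbour
`y` of `v` is farther from `a` than `v` is, so `v` is not maximally distant from `a`. Exchanging
`x` and `y` gives `b`, and the two invariants force `a ≠ b`.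
-/

section

variable {G : SimpleGraph V}

theorem exists_maxDistant_of_forall_adj_farther [Finite V] {t s : V} {P : V → Prop}
    (hP : ∀ u u', P u → G.Adj u u' → G.dist t u < G.dist t u' → P u') (hs : P s) :
    ∃ a, P a ∧ MaxDistant G a t := by
  obtain ⟨a, ha, hmax⟩ := Set.exists_max_image {u | P u} (G.dist t) (Set.toFinite _) ⟨s, hs⟩
  refine ⟨a, ha, fun w haw => ?_⟩
  by_contra! hlt
  exact (hmax w (hP a w ha haw hlt)).not_gt hlt

theorem strictlyBetween_of_adj_of_dist_lt {x v y u u' : V} (hvy : G.Adj v y)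
    (h : G.dist x u < G.dist v u ∧ G.dist v u < G.dist y u) (huu' : G.Adj u u')
    (hlt : G.dist y u < G.dist y u') :
    G.dist x u' < G.dist v u' ∧ G.dist v u' < G.dist y u' := by
  have huu'_dist : G.dist u u' = 1 := dist_eq_one_iff_adj.mpr huu'
  have hy := huu'.reachable.dist_triangle_right y
  have hv := huu'.reachable.dist_triangle_right v
  have hx := huu'.reachable.dist_triangle_right x
  have hyv := hvy.symm.reachable.dist_triangle_left u'
  rw [dist_eq_one_iff_adj.mpr hvy.symm] at hyv
  omega

theorem exists_maxDistant_strictlyBetween [Finite V] {x v y : V} (hvx : G.Adj v x)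
    (hvy : G.Adj v y) (hxy : x ≠ y) (hnadj : ¬ G.Adj x y) :
    ∃ a, MaxDistant G a y ∧ G.dist x a < G.dist v a ∧ G.dist v a < G.dist y a := by
  have hyx : 1 < G.dist y x :=
    (hvy.symm.reachable.trans hvx.reachable).one_lt_dist_of_ne_of_not_adj hxy.symm
      (fun h => hnadj h.symm)
  obtain ⟨a, hbetween, hmax⟩ := exists_maxDistant_of_forall_adj_farther
    (fun _ _ => strictlyBetween_of_adj_of_dist_lt hvy)
    (show G.dist x x < G.dist v x ∧ G.dist v x < G.dist y x by
      rw [dist_self, dist_eq_one_iff_adj.mpr hvx]; omega)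
  exact ⟨a, hmax, hbetween⟩

theorem not_maxDistant_of_adj_of_dist_lt {v y a : V} (hvy : G.Adj v y)
    (h : G.dist v a < G.dist y a) : ¬ MaxDistant G v a := fun hmax => by
  have := hmax y hvy
  rw [dist_comm, dist_comm (u := a)] at this
  omega

end

theorem stmt2_general [Fintype V] (G : SimpleGraph V)
    (v : V) (hns : ¬ IsSimplicial G v) :
    ∃ a ∈ boundary G, ∃ b ∈ boundary G, a ≠ v ∧ b ≠ v ∧ a ≠ b ∧
      ¬ MMD G v a ∧ ¬ MMD G v b := by
  simp only [IsSimplicial, not_forall] at hns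
  obtain ⟨x, y, hvx, hvy, hxy, hnadj⟩ := hns
  obtain ⟨a, hay, hxa, hva⟩ := exists_maxDistant_strictlyBetween hvx hvy hxy hnadj
  obtain ⟨b, hbx, hyb, hvb⟩ :=
    exists_maxDistant_strictlyBetween hvy hvx hxy.symm (fun h => hnadj h.symm)
  refine ⟨a, ⟨y, hay⟩, b, ⟨x, hbx⟩, ?_, ?_, ?_,
    fun h => not_maxDistant_of_adj_of_dist_lt hvy hva h.1,
    fun h => not_maxDistant_of_adj_of_dist_lt hvx hvb h.1⟩
  · rintro rfl
    simp at hxa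
  · rintro rfl
    simp at hyb
  · rintro rfl
    omega

theorem stmt2 [Fintype V] (G : SimpleGraph V) (hG : G.Connected)
    (v : V) (hv : v ∈ boundary G) (hns : ¬ IsSimplicial G v) :
    ∃ a ∈ boundary G, ∃ b ∈ boundary G, a ≠ v ∧ b ≠ v ∧ a ≠ b ∧
      ¬ MMD G v a ∧ ¬ MMD G v b :=
  stmt2_general G v hns
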